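/- F is an irreducible module for the Clifford algebra generated by the wedging and contracting operators: the only ℂ-subspaces of F invariant under all ψ_j and all ψ_j* (j ∈ ℤ) are 0 and F itself. -/

import Mathlib

/-!
`ψ_j^* ψ_j` is the projection onto the span of the monomials not containing `j`, so an
invariant subspace is stable under the projections onto monomials that do, or do not, contain a
given `j`. Two distinct monomials differ in some entry, so finitely many such projections cut a
nonzero `x ∈ S` down to a multiple of a single basis vector `φ`. Any two monomials differ in only
finitely many entries, and `ψ_j`, `ψ_j^*` add or remove one entry at a time up to sign, so from
`φ` every basis vector is reached inside `S`.
-/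

open Finsupp

/-- A semi-infinite monomial: a strictly decreasing sequence `seq : ℕ → ℤ` such that
for some `m : ℤ` (its charge) one has `seq k = m - k` for all sufficiently large `k`. -/
structure SIM : Type where
  seq : ℕ → ℤ
  anti : StrictAnti seq
  ex_charge : ∃ m : ℤ, ∃ N : ℕ, ∀ k, N ≤ k → seq k = m - (k : ℤ)

/-- Full fermionic Fock space: the free `ℂ`-vector space on the set of all
semi-infinite monomials. -/
abbrev FockF : Type := SIM →₀ ℂ

namespace SIM

/-- `φ` is a semi-infinite monomial of charge `m`. -/
def HasCharge (φ : SIM) (m : ℤ) : Prop := ∃ N : ℕ, ∀ k, N ≤ k → φ.seq k = m - (k : ℤ)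

theorem exists_lt (φ : SIM) (j : ℤ) : ∃ n : ℕ, φ.seq n < j := by
  obtain ⟨m, N, hN⟩ := φ.ex_charge
  refine ⟨N + (m - j).toNat + 1, ?_⟩
  have h1 := hN (N + (m - j).toNat + 1) (by omega)
  omega

/-- The position at which `j` is inserted into `φ`: the least `n` with `φ.seq n < j`.
If `i_s > j > i_{s+1}` this equals `s + 1`, and it equals `0` if `j > i_0`. -/
noncomputable def wedgePos (φ : SIM) (j : ℤ) : ℕ := Nat.find (φ.exists_lt j)

/-- The semi-infinite monomial obtained from `φ` by inserting `j` (assuming `j` does not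
occur in `φ`). -/
noncomputable def insertSIM (φ : SIM) (j : ℤ) (hj : ∀ s, φ.seq s ≠ j) : SIM where
  seq k := if k < φ.wedgePos j then φ.seq k else if k = φ.wedgePos j then j else φ.seq (k - 1)
  anti := by
    have hs : φ.seq (φ.wedgePos j) < j := Nat.find_spec (φ.exists_lt j)
    have hm : ∀ k, k < φ.wedgePos j → j < φ.seq k := by
      intro k hk
      have h1 := Nat.find_min (φ.exists_lt j) hk
      have h2 := hj k
      omega
    have ha : ∀ a b : ℕ, a < b → φ.seq b < φ.seq a := fun a b h => φ.anti h
    apply strictAnti_nat_of_succ_lt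
    intro k
    try dsimp only
    rcases lt_trichotomy k (φ.wedgePos j) with hk | hk | hk
    · rcases Nat.lt_or_ge (k + 1) (φ.wedgePos j) with hk1 | hk1
      · rw [if_pos hk, if_pos hk1]
        exact ha k (k + 1) (by omega)
      · have hk1' : k + 1 = φ.wedgePos j := by omega
        rw [if_pos hk, if_neg (by omega), if_pos hk1']
        exact hm k hk
    · rw [if_neg (by omega), if_neg (by omega), if_neg (by omega), if_pos hk,
        (by omega : k + 1 - 1 = k), hk]
      exact hs
    · rw [if_neg (by omega), if_neg (by omega), if_neg (by omega), if_neg (by omega),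
        (by omega : k + 1 - 1 = k)]
      exact ha (k - 1) k (by omega)
  ex_charge := by
    obtain ⟨m, N, hN⟩ := φ.ex_charge
    refine ⟨m + 1, N + φ.wedgePos j + 1, fun k hk => ?_⟩
    try dsimp only
    rw [if_neg (by omega), if_neg (by omega)]
    have h3 := hN (k - 1) (by omega)
    omega

/-- The semi-infinite monomial obtained from `φ` by deleting the entry in position `s`. -/
noncomputable def removeSIM (φ : SIM) (s : ℕ) : SIM where
  seq k := if k < s then φ.seq k else φ.seq (k + 1)
  anti := by
    apply strictAnti_nat_of_succ_lt
    intro k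
    try dsimp only
    split_ifs <;> exact φ.anti (by omega)
  ex_charge := by
    obtain ⟨m, N, hN⟩ := φ.ex_charge
    refine ⟨m - 1, N + s, fun k hk => ?_⟩
    try dsimp only
    rw [if_neg (by omega)]
    have h3 := hN (k + 1) (by omega)
    omega

end SIM

open Classical in
/-- The wedging operator `ψ_j` on full fermionic Fock space.  On a basis element
`φ = (i_0, i_1, ...)` it is `0` if `j = i_s` for some `s`, and otherwise it is
`(-1)^n` times the basis element obtained by inserting `j` in position `n`
(so `(-1)^{s+1}` when `i_s > j > i_{s+1}`, and `+1` when `j > i_0`). -/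
noncomputable def psi (j : ℤ) : FockF →ₗ[ℂ] FockF :=
  Finsupp.lift FockF ℂ SIM fun φ =>
    if hj : ∀ s, φ.seq s ≠ j then
      ((-1 : ℂ) ^ (φ.wedgePos j)) • Finsupp.single (φ.insertSIM j hj) 1
    else 0

open Classical in
/-- The contracting operator `ψ_j^*` on full fermionic Fock space.  On a basis element
`φ = (i_0, i_1, ...)` it is `0` if `j ≠ i_s` for all `s`, and `(-1)^s` times the basis
element obtained by deleting `i_s` if `j = i_s`. -/
noncomputable def psiStar (j : ℤ) : FockF →ₗ[ℂ] FockF :=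
  Finsupp.lift FockF ℂ SIM fun φ =>
    if hj : ∃ s, φ.seq s = j then
      ((-1 : ℂ) ^ hj.choose) • Finsupp.single (φ.removeSIM hj.choose) 1
    else 0

open scoped symmDiff

theorem Set.symmDiff_singleton_of_notMem {α : Type*} {s : Set α} {a : α} (ha : a ∉ s) :
    s ∆ {a} = insert a s := by
  rw [(Set.disjoint_singleton_right.mpr ha).symmDiff_eq_sup, ← Set.union_singleton]
  rfl

namespace SIM

def entries (φ : SIM) : Set ℤ := Set.range φ.seq

theorem entries_injective : Function.Injective entries := by
  intro φ ψ h
  -- a strictly decreasing sequence is strictly increasing into `ℤᵒᵈ`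
  have : φ.seq = ψ.seq := Set.range_injOn_strictMono (β := ℕ) (γ := ℤᵒᵈ) φ.anti ψ.anti h
  cases φ
  cases ψ
  congr

theorem exists_forall_le_mem_entries (φ : SIM) : ∃ B : ℤ, ∀ j ≤ B, j ∈ φ.entries := by
  obtain ⟨m, N, hN⟩ := φ.ex_charge
  refine ⟨m - N, fun j hj => ⟨(m - j).toNat, ?_⟩⟩
  rw [hN _ (by omega)]
  omega

theorem notMem_entries_of_seq_zero_lt (φ : SIM) {j : ℤ} (hj : φ.seq 0 < j) : j ∉ φ.entries := by
  rintro ⟨k, rfl⟩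
  exact (φ.anti.antitone (Nat.zero_le k)).not_gt hj

theorem finite_entries_symmDiff (φ ψ : SIM) : (φ.entries ∆ ψ.entries).Finite := by
  obtain ⟨A, hA⟩ := φ.exists_forall_le_mem_entries
  obtain ⟨B, hB⟩ := ψ.exists_forall_le_mem_entries
  refine (Set.finite_Icc (min A B) (max (φ.seq 0) (ψ.seq 0))).subset fun j hj => ?_
  by_contra hIcc
  rcases not_and_or.mp hIcc with hlow | hhigh
  · have hjA : j ≤ A := by omega
    have hjB : j ≤ B := by omega
    simp [Set.mem_symmDiff, hA j hjA, hB j hjB] at hj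
  · have hφ := φ.notMem_entries_of_seq_zero_lt (j := j) (by omega)
    have hψ := ψ.notMem_entries_of_seq_zero_lt (j := j) (by omega)
    simp [Set.mem_symmDiff, hφ, hψ] at hj

theorem insertSIM_seq_wedgePos (φ : SIM) (j : ℤ) (hj : ∀ s, φ.seq s ≠ j) :
    (φ.insertSIM j hj).seq (φ.wedgePos j) = j := by
  simp [insertSIM]

theorem entries_insertSIM (φ : SIM) (j : ℤ) (hj : ∀ s, φ.seq s ≠ j) :
    (φ.insertSIM j hj).entries = insert j φ.entries := by
  ext i
  simp only [entries, Set.mem_range, Set.mem_insert_iff]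
  constructor
  · rintro ⟨k, rfl⟩
    simp only [insertSIM]
    split_ifs
    exacts [Or.inr ⟨k, rfl⟩, Or.inl rfl, Or.inr ⟨k - 1, rfl⟩]
  · rintro (rfl | ⟨k, rfl⟩)
    · exact ⟨_, φ.insertSIM_seq_wedgePos i hj⟩
    · by_cases hk : k < φ.wedgePos j
      · exact ⟨k, by simp [insertSIM, hk]⟩
      · exact ⟨k + 1, by simp only [insertSIM]; rw [if_neg (by omega), if_neg (by omega)]; rfl⟩

theorem entries_removeSIM (φ : SIM) (s : ℕ) :
    (φ.removeSIM s).entries = φ.entries \ {φ.seq s} := by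
  ext i
  simp only [entries, removeSIM, Set.mem_range, Set.mem_sdiff, Set.mem_singleton_iff]
  constructor
  · rintro ⟨k, rfl⟩
    split_ifs
    · exact ⟨⟨k, rfl⟩, φ.anti.injective.ne (by omega)⟩
    · exact ⟨⟨k + 1, rfl⟩, φ.anti.injective.ne (by omega)⟩
  · rintro ⟨⟨k, rfl⟩, hks⟩
    have hks : k ≠ s := fun h => hks (h ▸ rfl)
    by_cases hk : k < s
    · exact ⟨k, if_pos hk⟩
    · exact ⟨k - 1, by rw [if_neg (by omega), Nat.sub_add_cancel (by omega)]⟩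

theorem removeSIM_insertSIM (φ : SIM) (j : ℤ) (hj : ∀ s, φ.seq s ≠ j) :
    (φ.insertSIM j hj).removeSIM (φ.wedgePos j) = φ := by
  apply entries_injective
  rw [entries_removeSIM, insertSIM_seq_wedgePos, entries_insertSIM,
    Set.insert_sdiff_self_of_notMem]
  rintro ⟨s, hs⟩
  exact hj s hs

end SIM

theorem psi_single_of_forall_ne {j : ℤ} {φ : SIM} (hj : ∀ s, φ.seq s ≠ j) (c : ℂ) :
    psi j (single φ c) = (-1 : ℂ) ^ φ.wedgePos j • single (φ.insertSIM j hj) c := by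
  simp [psi, hj, mul_comm]

theorem psi_single_of_mem_entries {j : ℤ} {φ : SIM} (hj : j ∈ φ.entries) (c : ℂ) :
    psi j (single φ c) = 0 := by
  obtain ⟨s, rfl⟩ := hj
  simp [psi]

theorem psiStar_single_of_seq_eq {j : ℤ} {φ : SIM} {s : ℕ} (hs : φ.seq s = j) (c : ℂ) :
    psiStar j (single φ c) = (-1 : ℂ) ^ s • single (φ.removeSIM s) c := by
  have hex : ∃ t, φ.seq t = j := ⟨s, hs⟩
  have hchoose : hex.choose = s := φ.anti.injective (hex.choose_spec.trans hs.symm)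
  simp [psiStar, hex, hchoose, mul_comm]

open Classical in
theorem psiStar_psi (j : ℤ) (x : FockF) :
    psiStar j (psi j x) = x.filter (fun φ => j ∉ φ.entries) := by
  induction x using Finsupp.induction_linear with
  | zero => simp [filter_zero]
  | add x y hx hy => rw [map_add, map_add, hx, hy, filter_add]
  | single φ c =>
    by_cases hj : j ∈ φ.entries
    · rw [psi_single_of_mem_entries hj, map_zero,
        filter_single_of_neg (fun φ : SIM => j ∉ φ.entries) (not_not.mpr hj)]
    · have hj' : ∀ s, φ.seq s ≠ j := fun s hs => hj ⟨s, hs⟩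
      rw [psi_single_of_forall_ne hj', map_smul,
        psiStar_single_of_seq_eq (φ.insertSIM_seq_wedgePos j hj'), SIM.removeSIM_insertSIM,
        smul_smul, ← mul_pow, neg_one_mul, neg_neg, one_pow, one_smul,
        filter_single_of_pos (fun φ : SIM => j ∉ φ.entries) hj]

structure IsCliffordStable (S : Submodule ℂ FockF) : Prop where
  psi_mem : ∀ j : ℤ, ∀ x ∈ S, psi j x ∈ S
  psiStar_mem : ∀ j : ℤ, ∀ x ∈ S, psiStar j x ∈ S

namespace IsCliffordStable

open Classical in
theorem filter_agree_mem {S : Submodule ℂ FockF} (hS : IsCliffordStable S) (φ : SIM)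
    (J : Finset ℤ) {x : FockF} (hx : x ∈ S) :
    x.filter (fun ψ => ∀ j ∈ J, (j ∈ ψ.entries ↔ j ∈ φ.entries)) ∈ S := by
  induction J using Finset.induction_on with
  | empty =>
    convert hx
    ext
    simp
  | insert j J _ ih =>
    set y := x.filter (fun ψ => ∀ j ∈ J, (j ∈ ψ.entries ↔ j ∈ φ.entries))
    -- `1 - ψ_j^* ψ_j` projects onto the monomials containing `j`
    have hnotMem : y.filter (fun ψ => j ∉ ψ.entries) ∈ S := by
      rw [← psiStar_psi]
      exact hS.psiStar_mem j _ (hS.psi_mem j _ ih)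
    have hmem : y.filter (fun ψ => j ∈ ψ.entries) ∈ S := by
      rw [← add_sub_cancel_right (y.filter _) (y.filter fun ψ => j ∉ ψ.entries),
        filter_add_filter_not]
      exact S.sub_mem ih hnotMem
    by_cases hj : j ∈ φ.entries
    · convert hmem using 1
      ext ψ
      simp [y, filter_apply, hj, ite_and]
    · convert hnotMem using 1
      ext ψ
      simp [y, filter_apply, hj, ite_and]

open Classical in
theorem single_one_mem_of_apply_ne_zero {S : Submodule ℂ FockF} (hS : IsCliffordStable S)
    {x : FockF} (hx : x ∈ S) {φ : SIM} (hφ : x φ ≠ 0) : single φ 1 ∈ S := by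
  let J := x.support.biUnion fun ψ => (SIM.finite_entries_symmDiff ψ φ).toFinset
  have hJ : x.filter (fun ψ => ∀ j ∈ J, (j ∈ ψ.entries ↔ j ∈ φ.entries)) = single φ (x φ) := by
    rw [← filter_eq']
    ext ψ
    simp only [filter_apply]
    by_cases hψ : ψ = φ
    · simp [hψ]
    rw [if_neg hψ, ite_eq_right_iff]
    intro hagree
    by_contra hxψ
    obtain ⟨j, hj⟩ : (ψ.entries ∆ φ.entries).Nonempty := by
      rw [Set.nonempty_iff_ne_empty, ← Set.bot_eq_empty, Ne, symmDiff_eq_bot]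
      exact fun h => hψ (SIM.entries_injective h)
    have hjJ : j ∈ J := Finset.mem_biUnion.mpr ⟨ψ, mem_support_iff.mpr hxψ, by simpa using hj⟩
    rw [Set.mem_symmDiff] at hj
    have := hagree j hjJ
    tauto
  have hsingle := hS.filter_agree_mem φ J hx
  rw [hJ, ← mul_one (x φ), ← smul_eq_mul, ← smul_single, S.smul_mem_iff hφ] at hsingle
  exact hsingle

theorem exists_entries_eq_symmDiff_singleton {S : Submodule ℂ FockF} (hS : IsCliffordStable S)
    {φ : SIM} (hφ : single φ 1 ∈ S) (j : ℤ) :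
    ∃ φ' : SIM, φ'.entries = φ.entries ∆ {j} ∧ single φ' 1 ∈ S := by
  have hsign : ∀ n : ℕ, (-1 : ℂ) ^ n ≠ 0 := fun n => pow_ne_zero n (by norm_num)
  by_cases hj : j ∈ φ.entries
  · obtain ⟨s, rfl⟩ := hj
    refine ⟨φ.removeSIM s, ?_, ?_⟩
    · rw [SIM.entries_removeSIM]
      exact (symmDiff_of_ge (a := φ.entries) (Set.singleton_subset_iff.mpr ⟨s, rfl⟩)).symm
    · have h := hS.psiStar_mem (φ.seq s) _ hφ
      rwa [psiStar_single_of_seq_eq rfl, S.smul_mem_iff (hsign s)] at h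
  · have hj' : ∀ s, φ.seq s ≠ j := fun s hs => hj ⟨s, hs⟩
    refine ⟨φ.insertSIM j hj', ?_, ?_⟩
    · rw [SIM.entries_insertSIM, Set.symmDiff_singleton_of_notMem hj]
    · have h := hS.psi_mem j _ hφ
      rwa [psi_single_of_forall_ne hj', S.smul_mem_iff (hsign _)] at h

theorem single_one_mem {S : Submodule ℂ FockF} (hS : IsCliffordStable S)
    {φ : SIM} (hφ : single φ 1 ∈ S) (ψ : SIM) : single ψ 1 ∈ S := by
  obtain ⟨D, hD⟩ := (SIM.finite_entries_symmDiff φ ψ).exists_finset_coe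
  induction D using Finset.induction_on generalizing φ with
  | empty =>
    rw [Finset.coe_empty, ← Set.bot_eq_empty, eq_comm, symmDiff_eq_bot] at hD
    rwa [← SIM.entries_injective hD]
  | insert j D hjD ih =>
    obtain ⟨φ', hφ'entries, hφ'⟩ := hS.exists_entries_eq_symmDiff_singleton hφ j
    refine ih hφ' ?_
    rw [hφ'entries, symmDiff_right_comm, ← hD, Finset.coe_insert,
      ← Set.symmDiff_singleton_of_notMem (Finset.mem_coe.not.mpr hjD),
      symmDiff_symmDiff_cancel_right]

theorem eq_top_of_ne_bot {S : Submodule ℂ FockF} (hS : IsCliffordStable S) (hS₀ : S ≠ ⊥) :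
    S = ⊤ := by
  obtain ⟨x, hx, hx₀⟩ := Submodule.exists_mem_ne_zero_of_ne_bot hS₀
  obtain ⟨φ, hφ⟩ := Finsupp.ne_iff.mp hx₀
  rw [eq_top_iff, ← Finsupp.basisSingleOne.span_eq, Submodule.span_le]
  rintro _ ⟨ψ, rfl⟩
  simpa using hS.single_one_mem (hS.single_one_mem_of_apply_ne_zero hx hφ) ψ

end IsCliffordStable

/-- `F` is an irreducible module for the Clifford algebra generated by the
wedging and contracting operators: the only `ℂ`-subspaces of `F` invariant under all
`ψ_j` and all `ψ_j^*` (`j ∈ ℤ`) are `0` and `F` itself. -/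
theorem fock_clifford_irreducible (S : Submodule ℂ FockF)
    (hpsi : ∀ j : ℤ, ∀ x ∈ S, psi j x ∈ S)
    (hpsiStar : ∀ j : ℤ, ∀ x ∈ S, psiStar j x ∈ S) :
    S = ⊥ ∨ S = ⊤ :=
  or_iff_not_imp_left.mpr (IsCliffordStable.mk hpsi hpsiStar).eq_top_of_ne_bot
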